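/- arXiv:1004.0290 — 5 statements merged into one kernel-verified Lean document; each statement's English description precedes it below -/
import Mathlib

section
/- For an algebraic curvature tensor R on ℝ^n with Ricci tensor Ric(R) = (n-1)g (where g is the standard metric), if S = R - κ·I where I_{ijkl} = g_{ik}g_{jl} - g_{il}g_{jk} and κ is a real constant, then Q(S) = Q(R) + 2(n-1)κ(κ-2)·I, where Q(R)_{ijkl} = Σ_{p,q} R_{ijpq}R_{klpq} + 2Σ_{p,q}(R_{ipkq}R_{jplq} - R_{iplq}R_{jpkq}). -/
open Finset

/-- Kronecker delta on `Fin n`. -/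
def kron {n : ℕ} (i j : Fin n) : ℝ := if i = j then 1 else 0

/-- The identity curvature tensor `I_{ijkl} = δ_{ik}δ_{jl} - δ_{il}δ_{jk}`. -/
def Idt (n : ℕ) : Fin n → Fin n → Fin n → Fin n → ℝ :=
  fun i j k l => kron i k * kron j l - kron i l * kron j k

/-- Hamilton's quadratic term `Q(R)`. -/
def Qc {n : ℕ} (R : Fin n → Fin n → Fin n → Fin n → ℝ) :
    Fin n → Fin n → Fin n → Fin n → ℝ :=
  fun i j k l =>
    (∑ p, ∑ q, R i j p q * R k l p q) +
    2 * ∑ p, ∑ q, (R i p k q * R j p l q - R i p l q * R j p k q)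

/-- Algebraic curvature tensor: symmetries and first Bianchi identity. -/
def IsACT {n : ℕ} (R : Fin n → Fin n → Fin n → Fin n → ℝ) : Prop :=
  (∀ i j k l, R i j k l = - R j i k l) ∧
  (∀ i j k l, R i j k l = - R i j l k) ∧
  (∀ i j k l, R i j k l = R k l i j) ∧
  (∀ i j k l, R i j k l + R j k i l + R k i j l = 0)

/-- Ricci tensor `Ric_{ik} = Σ_j R_{ijkj}`. -/
def Ric {n : ℕ} (R : Fin n → Fin n → Fin n → Fin n → ℝ) : Fin n → Fin n → ℝ :=
  fun i k => ∑ j, R i j k j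

/-- Scalar curvature `scal = Σ_{i,j} R_{ijij}`. -/
def scal {n : ℕ} (R : Fin n → Fin n → Fin n → Fin n → ℝ) : ℝ := ∑ i, ∑ j, R i j i j

lemma kron_comm {n : ℕ} (a b : Fin n) : kron a b = kron b a := by
  simp [kron, eq_comm]

lemma sum_mul_kron {n : ℕ} (f : Fin n → ℝ) (a : Fin n) :
    ∑ q, f q * kron a q = f a := by
  simp [kron, mul_ite, Finset.sum_ite_eq]

lemma sum_kron_mul {n : ℕ} (f : Fin n → ℝ) (a : Fin n) :
    ∑ q, kron a q * f q = f a := by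
  simp [kron, ite_mul, Finset.sum_ite_eq]

lemma sum_kron_fst {n : ℕ} (f : Fin n → ℝ) (a : Fin n) :
    ∑ q, kron q a * f q = f a := by
  simp [kron, ite_mul, Finset.sum_ite_eq']

lemma sumRI {n : ℕ} (A : Fin n → Fin n → ℝ) (a b : Fin n) :
    ∑ p, ∑ q, A p q * Idt n a b p q = A a b - A b a := by
  have h : ∀ p : Fin n, (∑ q, A p q * Idt n a b p q)
      = kron a p * A p b - kron b p * A p a := by
    intro p
    have e : ∀ q, A p q * Idt n a b p q
        = kron a p * (A p q * kron b q) - kron b p * (A p q * kron a q) := by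
      intro q; simp only [Idt]; ring
    simp only [e, Finset.sum_sub_distrib, ← Finset.mul_sum, sum_mul_kron]
  simp only [h, Finset.sum_sub_distrib]
  rw [show (∑ p, kron a p * A p b) = A a b from sum_kron_mul (fun p => A p b) a,
      show (∑ p, kron b p * A p a) = A b a from sum_kron_mul (fun p => A p a) b]

lemma sumIR {n : ℕ} (A : Fin n → Fin n → ℝ) (a b : Fin n) :
    ∑ p, ∑ q, Idt n a b p q * A p q = A a b - A b a := by
  have : ∀ p q, Idt n a b p q * A p q = A p q * Idt n a b p q := fun p q => mul_comm _ _
  simp only [this, sumRI]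

lemma sumMR {n : ℕ} (A : Fin n → Fin n → ℝ) (a b : Fin n) :
    ∑ p, ∑ q, A p q * Idt n a p b q = kron a b * (∑ p, A p p) - A b a := by
  have h : ∀ p : Fin n, (∑ q, A p q * Idt n a p b q)
      = kron a b * A p p - kron p b * A p a := by
    intro p
    have e : ∀ q, A p q * Idt n a p b q
        = kron a b * (A p q * kron p q) - kron p b * (A p q * kron a q) := by
      intro q; simp only [Idt]; ring
    simp only [e, Finset.sum_sub_distrib, ← Finset.mul_sum, sum_mul_kron]
  simp only [h, Finset.sum_sub_distrib, ← Finset.mul_sum]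
  rw [show (∑ p, kron p b * A p a) = A b a from sum_kron_fst (fun p => A p a) b]

lemma sumMI {n : ℕ} (A : Fin n → Fin n → ℝ) (a b : Fin n) :
    ∑ p, ∑ q, Idt n a p b q * A p q = kron a b * (∑ p, A p p) - A b a := by
  have : ∀ p q, Idt n a p b q * A p q = A p q * Idt n a p b q := fun p q => mul_comm _ _
  simp only [this, sumMR]

lemma traceI {n : ℕ} (a b : Fin n) : ∑ p, Idt n a p b p = ((n : ℝ) - 1) * kron a b := by
  have e : ∀ p : Fin n, Idt n a p b p = kron a b - kron a p * kron p b := by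
    intro p
    simp only [Idt]
    rw [show kron p p = (1 : ℝ) from by simp [kron]]
    ring
  rw [Finset.sum_congr rfl (fun p _ => e p), Finset.sum_sub_distrib,
      show (∑ p, kron a p * kron p b) = kron a b from sum_kron_mul (fun p => kron p b) a]
  simp [Finset.card_univ, nsmul_eq_mul]
  ring

lemma qsplit {n : ℕ} (A B C D : Fin n → Fin n → ℝ) (κ : ℝ) :
    (∑ p, ∑ q, (A p q - κ * B p q) * (C p q - κ * D p q))
    = (∑ p, ∑ q, A p q * C p q) - κ * (∑ p, ∑ q, A p q * D p q)
      - κ * (∑ p, ∑ q, B p q * C p q) + κ ^ 2 * (∑ p, ∑ q, B p q * D p q) := by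
  have e : ∀ p q, (A p q - κ * B p q) * (C p q - κ * D p q)
      = A p q * C p q - κ * (A p q * D p q) - κ * (B p q * C p q)
        + κ ^ 2 * (B p q * D p q) := by intros; ring
  simp only [e, Finset.sum_add_distrib, Finset.sum_sub_distrib, ← Finset.mul_sum]

/-- If `Ric(R) = (n-1)g` and `S = R - κ I`, then `Q(S) = Q(R) + 2(n-1)κ(κ-2) I`. -/
theorem stmt0 (n : ℕ) (R : Fin n → Fin n → Fin n → Fin n → ℝ) (hR : IsACT R)
    (hRic : ∀ i k, Ric R i k = ((n : ℝ) - 1) * kron i k) (κ : ℝ)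
    (S : Fin n → Fin n → Fin n → Fin n → ℝ)
    (hS : ∀ i j k l, S i j k l = R i j k l - κ * Idt n i j k l) :
    ∀ i j k l, Qc S i j k l =
      Qc R i j k l + 2 * ((n : ℝ) - 1) * κ * (κ - 2) * Idt n i j k l := by
  obtain ⟨ha1, ha2, hpair, hbia⟩ := hR
  have hRic' : ∀ a b, (∑ p, R a p b p) = ((n : ℝ) - 1) * kron a b := hRic
  intro i j k l
  simp only [Qc, hS, Finset.sum_sub_distrib, qsplit]
  simp only [sumRI, sumIR, sumMR, sumMI, hRic', traceI]
  simp only [Idt]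
  -- symmetry facts
  have e1 : R i j l k = -R i j k l := by rw [ha2 i j k l]; ring
  have e2 : R k l i j = R i j k l := (hpair i j k l).symm
  have e3 : R k l j i = -R i j k l := by rw [ha2 k l j i, e2]
  have e4 : R i k l j = R i l k j - R i j k l := by
    have b := hbia i k l j
    have := ha1 l i k j
    have := hpair i j k l
    -- R i k l j + R k l i j + R l i k j = 0, R l i k j = -R i l k j, R k l i j = R i j k l
    linarith [hbia i k l j, ha1 l i k j, hpair i j k l, ha1 i l k j]
  have e5 : R j l k i = R j k l i - R i j k l := by
    have b := hbia j l k i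
    have h1 : R k j l i = -R j k l i := by linarith [ha1 j k l i]
    have h2 : R l k j i = R i j k l := by
      rw [← hpair j i l k, ha1 j i l k, ha2 i j l k, ha2 i j k l]; ring
    linarith
  rw [e1, e2, e3, e4, e5]
  simp only [kron_comm l j, kron_comm l k, kron_comm k j]
  ring
end

section
/- For any algebraic curvature tensor R on ℝ^n and any real constant κ, Q(R - κI) = Q(R) + 2(n-1)κ²·I - 2κ·(Ric ∧ g), where (Ric ∧ g)_{ijkl} = Ric_{ik}g_{jl} - Ric_{il}g_{jk} - Ric_{jk}g_{il} + Ric_{jl}g_{ik} and I_{ijkl} = g_{ik}g_{jl} - g_{il}g_{jk}. -/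
open Finset

lemma sumLA {n : ℕ} (R : Fin n → Fin n → Fin n → Fin n → ℝ) (a b c d : Fin n) :
    ∑ p, ∑ q, R a b p q * (kron c p * kron d q - kron c q * kron d p)
      = R a b c d - R a b d c := by
  simp [kron, mul_sub, sub_mul, mul_ite, ite_mul, Finset.sum_sub_distrib]

lemma sumLB {n : ℕ} (R : Fin n → Fin n → Fin n → Fin n → ℝ) (a b c d : Fin n) :
    ∑ p, ∑ q, (kron a p * kron b q - kron a q * kron b p) * R c d p q
      = R c d a b - R c d b a := by
  simp [kron, mul_sub, sub_mul, mul_ite, ite_mul, Finset.sum_sub_distrib]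

lemma sumLC {n : ℕ} (a b c d : Fin n) :
    ∑ p, ∑ q, (kron a p * kron b q - kron a q * kron b p) *
        (kron c p * kron d q - kron c q * kron d p)
      = 2 * (kron a c * kron b d - kron a d * kron b c) := by
  simp [kron, mul_sub, sub_mul, mul_ite, ite_mul, Finset.sum_sub_distrib]
  by_cases h1 : a = c <;> by_cases h2 : b = d <;> by_cases h3 : a = d <;> by_cases h4 : b = c <;>
    subst_vars <;> simp_all [eq_comm] <;> ring

lemma sumC1 {n : ℕ} (R : Fin n → Fin n → Fin n → Fin n → ℝ) (a b c d : Fin n) :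
    ∑ p, ∑ q, R a p c q * (kron b d * kron p q - kron b q * kron p d)
      = kron b d * Ric R a c - R a d c b := by
  simp [kron, Ric, mul_sub, sub_mul, mul_ite, ite_mul, Finset.sum_sub_distrib, Finset.mul_sum]

lemma sumC2 {n : ℕ} (R : Fin n → Fin n → Fin n → Fin n → ℝ) (a b c d : Fin n) :
    ∑ p, ∑ q, (kron a c * kron p q - kron a q * kron p c) * R b p d q
      = kron a c * Ric R b d - R b c d a := by
  simp [kron, Ric, mul_sub, sub_mul, mul_ite, ite_mul, Finset.sum_sub_distrib, Finset.mul_sum]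

lemma sumC3 {n : ℕ} (a b c d : Fin n) :
    ∑ p, ∑ q, (kron a c * kron p q - kron a q * kron p c) *
        (kron b d * kron p q - kron b q * kron p d)
      = ((n : ℝ) - 2) * (kron a c * kron b d) + kron a b * kron c d := by
  simp [kron, mul_sub, sub_mul, mul_ite, ite_mul, Finset.sum_sub_distrib, Finset.mul_sum]
  by_cases h1 : b = d <;> by_cases h2 : a = c <;> by_cases h3 : c = d <;> by_cases h4 : a = b <;>
    subst_vars <;> simp_all [eq_comm] <;> ring

/-- `Q(R - κI) = Q(R) + 2(n-1)κ² I - 2κ (Ric ∧ g)`. -/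
theorem stmt1 (n : ℕ) (R : Fin n → Fin n → Fin n → Fin n → ℝ) (hR : IsACT R) (κ : ℝ)
    (S : Fin n → Fin n → Fin n → Fin n → ℝ)
    (hS : ∀ i j k l, S i j k l = R i j k l - κ * Idt n i j k l)
    (RicWedge : Fin n → Fin n → Fin n → Fin n → ℝ)
    (hW : ∀ i j k l, RicWedge i j k l =
      Ric R i k * kron j l - Ric R i l * kron j k
        - Ric R j k * kron i l + Ric R j l * kron i k) :
    ∀ i j k l, Qc S i j k l =
      Qc R i j k l + 2 * ((n : ℝ) - 1) * κ ^ 2 * Idt n i j k l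
        - 2 * κ * RicWedge i j k l := by
  obtain ⟨hanti1, hanti2, hsym, hbianchi⟩ := hR
  intro i j k l
  have E1 : (∑ p, ∑ q, S i j p q * S k l p q)
      = (∑ p, ∑ q, R i j p q * R k l p q)
        - κ * ((R i j k l - R i j l k) + (R k l i j - R k l j i))
        + κ ^ 2 * (2 * (kron i k * kron j l - kron i l * kron j k)) := by
    have h : ∀ p ∈ (univ : Finset (Fin n)), ∑ q, S i j p q * S k l p q
        = ∑ q, (R i j p q * R k l p q
            - κ * (R i j p q * (kron k p * kron l q - kron k q * kron l p))
            - κ * ((kron i p * kron j q - kron i q * kron j p) * R k l p q)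
            + κ ^ 2 * ((kron i p * kron j q - kron i q * kron j p) *
                (kron k p * kron l q - kron k q * kron l p))) := by
      intro p _
      refine Finset.sum_congr rfl fun q _ => ?_
      simp only [hS, Idt]; ring
    rw [Finset.sum_congr rfl h]
    simp only [Finset.sum_add_distrib, Finset.sum_sub_distrib, ← Finset.mul_sum]
    rw [sumLA, sumLB, sumLC]
    ring
  have E2 : ∀ a b c d : Fin n, (∑ p, ∑ q, S a p c q * S b p d q)
      = (∑ p, ∑ q, R a p c q * R b p d q)
        - κ * (kron b d * Ric R a c - R a d c b)
        - κ * (kron a c * Ric R b d - R b c d a)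
        + κ ^ 2 * (((n : ℝ) - 2) * (kron a c * kron b d) + kron a b * kron c d) := by
    intro a b c d
    have h : ∀ p ∈ (univ : Finset (Fin n)), ∑ q, S a p c q * S b p d q
        = ∑ q, (R a p c q * R b p d q
            - κ * (R a p c q * (kron b d * kron p q - kron b q * kron p d))
            - κ * ((kron a c * kron p q - kron a q * kron p c) * R b p d q)
            + κ ^ 2 * ((kron a c * kron p q - kron a q * kron p c) *
                (kron b d * kron p q - kron b q * kron p d))) := by
      intro p _
      refine Finset.sum_congr rfl fun q _ => ?_
      simp only [hS, Idt]; ring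
    rw [Finset.sum_congr rfl h]
    simp only [Finset.sum_add_distrib, Finset.sum_sub_distrib, ← Finset.mul_sum]
    rw [sumC1, sumC2, sumC3]
  have Esplit : (∑ p, ∑ q, (S i p k q * S j p l q - S i p l q * S j p k q))
      = (∑ p, ∑ q, S i p k q * S j p l q) - (∑ p, ∑ q, S i p l q * S j p k q) := by
    simp [Finset.sum_sub_distrib]
  have Rsplit : (∑ p, ∑ q, (R i p k q * R j p l q - R i p l q * R j p k q))
      = (∑ p, ∑ q, R i p k q * R j p l q) - (∑ p, ∑ q, R i p l q * R j p k q) := by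
    simp [Finset.sum_sub_distrib]
  have hA : R i j k l - R i j l k + R k l i j - R k l j i = 4 * R i j k l := by
    have h1 := hanti2 i j k l
    have h2 := hsym i j k l
    have h3 := hsym j i k l
    have h4 := hanti1 i j k l
    linarith
  have hDE : R i l k j - R i k l j + R j k l i - R j l k i = 2 * R i j k l := by
    have b1 := hbianchi i k l j
    have s1 := hsym k l i j
    have a1 := hanti1 l i k j
    have b2 := hbianchi j l k i
    have s2 := hsym l k j i
    have a2 := hanti1 j i l k
    have a3 := hanti2 i j k l
    have a4 := hanti1 k j l i
    linarith
  have hK : kron l k = kron k l := kron_comm l k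
  simp only [Qc, Esplit, Rsplit, E1, E2, hW, Idt]
  linear_combination (-κ) * hA + (2 * κ) * hDE + (-2 * κ ^ 2 * kron i j) * hK
end

section
/- For any algebraic curvature tensor R on ℝ^n, the tensor Q(R) defined by Q(R)_{ijkl} = Σ_{p,q} R_{ijpq}R_{klpq} + 2Σ_{p,q}(R_{ipkq}R_{jplq} - R_{iplq}R_{jpkq}) is again an algebraic curvature tensor, i.e., it satisfies Q(R)_{ijkl} = -Q(R)_{jikl} = -Q(R)_{ijlk} = Q(R)_{klij} and the first Bianchi identity. -/
open Finset

/-- auxiliary: `A_{ijkl} = Σ R_{ijpq} R_{klpq}`. -/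
def At {n : ℕ} (R : Fin n → Fin n → Fin n → Fin n → ℝ) (i j k l : Fin n) : ℝ :=
  ∑ p, ∑ q, R i j p q * R k l p q

/-- auxiliary: `C_{ijkl} = Σ R_{ipkq} R_{jplq}`. -/
def Ct {n : ℕ} (R : Fin n → Fin n → Fin n → Fin n → ℝ) (i j k l : Fin n) : ℝ :=
  ∑ p, ∑ q, R i p k q * R j p l q

lemma Qc_eq {n : ℕ} (R : Fin n → Fin n → Fin n → Fin n → ℝ) (i j k l : Fin n) :
    Qc R i j k l = At R i j k l + 2 * (Ct R i j k l - Ct R i j l k) := by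
  simp [Qc, At, Ct, Finset.sum_sub_distrib]

lemma Ct_sym1 {n : ℕ} (R : Fin n → Fin n → Fin n → Fin n → ℝ) (i j k l : Fin n) :
    Ct R i j k l = Ct R j i l k :=
  Finset.sum_congr rfl fun p _ => Finset.sum_congr rfl fun q _ => mul_comm _ _

lemma Ct_sym2 {n : ℕ} (R : Fin n → Fin n → Fin n → Fin n → ℝ)
    (h3 : ∀ i j k l, R i j k l = R k l i j) (i j k l : Fin n) :
    Ct R k l i j = Ct R i j k l := by
  unfold Ct
  rw [show (∑ p, ∑ q, R k p i q * R l p j q) = ∑ p, ∑ q, R i q k p * R j q l p from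
    Finset.sum_congr rfl fun p _ => Finset.sum_congr rfl fun q _ => by
      rw [h3 k p i q, h3 l p j q]]
  exact Finset.sum_comm

lemma At_a1 {n : ℕ} (R : Fin n → Fin n → Fin n → Fin n → ℝ)
    (h1 : ∀ i j k l, R i j k l = - R j i k l) (i j k l : Fin n) :
    At R j i k l = - At R i j k l := by
  have : At R j i k l = ∑ p, ∑ q, -(R i j p q * R k l p q) :=
    Finset.sum_congr rfl fun p _ => Finset.sum_congr rfl fun q _ => by
      rw [h1 j i p q]; ring
  rw [this]; simp [At]

lemma At_a2 {n : ℕ} (R : Fin n → Fin n → Fin n → Fin n → ℝ)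
    (h1 : ∀ i j k l, R i j k l = - R j i k l) (i j k l : Fin n) :
    At R i j l k = - At R i j k l := by
  have : At R i j l k = ∑ p, ∑ q, -(R i j p q * R k l p q) :=
    Finset.sum_congr rfl fun p _ => Finset.sum_congr rfl fun q _ => by
      rw [h1 l k p q]; ring
  rw [this]; simp [At]

lemma At_pair {n : ℕ} (R : Fin n → Fin n → Fin n → Fin n → ℝ) (i j k l : Fin n) :
    At R k l i j = At R i j k l :=
  Finset.sum_congr rfl fun p _ => Finset.sum_congr rfl fun q _ => mul_comm _ _

lemma keyA {n : ℕ} (R : Fin n → Fin n → Fin n → Fin n → ℝ)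
    (h1 : ∀ i j k l, R i j k l = - R j i k l)
    (h3 : ∀ i j k l, R i j k l = R k l i j)
    (h4 : ∀ i j k l, R i j k l + R j k i l + R k i j l = 0) (i j k l : Fin n) :
    At R i j k l = 2 * Ct R i k j l - 2 * Ct R i l j k := by
  have step : At R i j k l = ∑ p, ∑ q,
      (R j p i q * R l p k q + R i p j q * R k p l q
        - R j p i q * R k p l q - R i p j q * R l p k q) := by
    refine Finset.sum_congr rfl fun p _ => Finset.sum_congr rfl fun q _ => ?_
    have b1 := h4 i j p q
    have b2 := h4 k l p q
    have e1 := h1 p i j q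
    have e2 := h1 p k l q
    have f1 : R i j p q = -R j p i q + R i p j q := by linarith
    have f2 : R k l p q = -R l p k q + R k p l q := by linarith
    rw [f1, f2]; ring
  rw [step]
  simp only [Finset.sum_sub_distrib, Finset.sum_add_distrib]
  have c1 : (∑ p, ∑ q, R j p i q * R l p k q) = Ct R i k j l := Ct_sym2 R h3 i k j l

  have c3 : (∑ p, ∑ q, R j p i q * R k p l q) = Ct R i l j k := Ct_sym2 R h3 i l j k
  rw [c1, c3]
  show Ct R i k j l + Ct R i k j l - Ct R i l j k - Ct R i l j k = _
  ring

/-- If `R` is an algebraic curvature tensor, so is `Q(R)`. -/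
theorem stmt3 (n : ℕ) (R : Fin n → Fin n → Fin n → Fin n → ℝ) (hR : IsACT R) :
    IsACT (Qc R) := by
  obtain ⟨h1, h2, h3, h4⟩ := hR
  have h2' : ∀ i j k l, R i j k l = - R i j l k := h2
  have h1' : ∀ i j k l, R i j k l = - R j i k l := h1
  refine ⟨fun i j k l => ?_, fun i j k l => ?_, fun i j k l => ?_, fun i j k l => ?_⟩
  · rw [Qc_eq, Qc_eq, At_a1 R h1, Ct_sym1 R j i k l, Ct_sym1 R j i l k]
    ring
  · have h2s : ∀ i j k l, R i j l k = - R i j k l := fun i j k l => by rw [h2 i j k l]; ring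
    rw [Qc_eq, Qc_eq]
    have : At R i j l k = - At R i j k l := by
      have : At R i j l k = ∑ p, ∑ q, -(R i j p q * R k l p q) :=
        Finset.sum_congr rfl fun p _ => Finset.sum_congr rfl fun q _ => by
          rw [show R l k p q = - R k l p q from by rw [h1 l k p q]]; ring
      rw [this]; simp [At]
    rw [this]; ring
  · rw [Qc_eq, Qc_eq, At_pair, Ct_sym2 R h3 i j k l,
      show Ct R k l j i = Ct R i j l k from by rw [Ct_sym1 R k l j i]; exact Ct_sym2 R h3 i j l k]
  · rw [Qc_eq, Qc_eq, Qc_eq, keyA R h1 h3 h4 i j k l, keyA R h1 h3 h4 j k i l,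
      keyA R h1 h3 h4 k i j l]
    -- rewrite all Ct terms to canonical (i-first) form
    have s1 : Ct R j i k l = Ct R i j l k := Ct_sym1 R j i k l
    have s2 : Ct R j l k i = Ct R i k l j := by
      rw [show Ct R j l k i = Ct R l j i k from Ct_sym1 R j l k i,
          show Ct R l j i k = Ct R i k l j from Ct_sym2 R h3 i k l j]
    have s3 : Ct R j k i l = Ct R i l j k := Ct_sym2 R h3 i l j k
    have s4 : Ct R j k l i = Ct R i l k j := by
      rw [show Ct R j k l i = Ct R k j i l from Ct_sym1 R j k l i,
          show Ct R k j i l = Ct R i l k j from Ct_sym2 R h3 i l k j]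
    have s5 : Ct R k j i l = Ct R i l k j := Ct_sym2 R h3 i l k j
    have s6 : Ct R k l i j = Ct R i j k l := Ct_sym2 R h3 i j k l
    have s7 : Ct R k i j l = Ct R i k l j := Ct_sym1 R k i j l
    have s8 : Ct R k i l j = Ct R i k j l := Ct_sym1 R k i l j
    rw [s1, s2, s3, s4, s5, s6, s7, s8]
    ring
end

section
/- Let C be a closed convex cone in a finite-dimensional real vector space and S ∈ C. If -I lies in the interior of the tangent cone T_S C for some fixed vector I in the interior of C, then S lies in the interior of C; in fact there exists ε > 0 with S - εI ∈ C. -/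
open Finset

/-- A closed convex cone. -/
def IsClosedConvexCone {V : Type*} [AddCommGroup V] [Module ℝ V] [TopologicalSpace V]
    (C : Set V) : Prop :=
  IsClosed C ∧ Convex ℝ C ∧ ∀ r : ℝ, 0 ≤ r → ∀ x ∈ C, r • x ∈ C

/-- The tangent cone to `C` at `S`: the closure of `{λ (x - S) : x ∈ C, λ ≥ 0}`. -/
def tanCone {V : Type*} [AddCommGroup V] [Module ℝ V] [TopologicalSpace V]
    (C : Set V) (S : V) : Set V :=
  closure {v | ∃ x ∈ C, ∃ l : ℝ, 0 ≤ l ∧ v = l • (x - S)}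

/-!
Pick a ball `B(I, δ) ⊆ C`. Since `-I` is in the tangent cone, some `l • (x - S)` with `x ∈ C`,
`l ≥ 0` lies within `δ / 2` of `-I`; then `v := -I - 2 l • (x - S)` lies in `B(I, δ) ⊆ C` and
`(l + 1) • S - I / 2 = (l • x + S) + v / 2 ∈ C`, so `S - ε • I ∈ C` for `ε = (2 (l + 1))⁻¹`.
Finally `S = (S - ε • I) + ε • I` is a point of `C` plus an interior point of `C`, hence interior.
-/

namespace IsClosedConvexCone

variable {V : Type*} [AddCommGroup V] [Module ℝ V] [TopologicalSpace V] {C : Set V}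

lemma smul_mem (hC : IsClosedConvexCone C) {r : ℝ} (hr : 0 ≤ r) {x : V} (hx : x ∈ C) :
    r • x ∈ C :=
  hC.2.2 r hr x hx

lemma add_mem (hC : IsClosedConvexCone C) {x y : V} (hx : x ∈ C) (hy : y ∈ C) : x + y ∈ C := by
  have hmid : (1 / 2 : ℝ) • x + (1 / 2 : ℝ) • y ∈ C :=
    hC.2.1 hx hy (by norm_num) (by norm_num) (by norm_num)
  convert hC.smul_mem (r := 2) (by norm_num) hmid using 1
  module

lemma add_mem_interior [ContinuousAdd V] (hC : IsClosedConvexCone C) {x y : V} (hx : x ∈ C)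
    (hy : y ∈ interior C) : x + y ∈ interior C := by
  refine interior_maximal ?_ (isOpen_interior.vadd x) (Set.vadd_mem_vadd_set hy)
  rintro _ ⟨z, hz, rfl⟩
  exact hC.add_mem hx (interior_subset hz)

open scoped Pointwise in
lemma smul_mem_interior [ContinuousConstSMul ℝ V] (hC : IsClosedConvexCone C) {r : ℝ}
    (hr : 0 < r) {x : V} (hx : x ∈ interior C) : r • x ∈ interior C := by
  have hsub : r • C ⊆ C := by
    rintro _ ⟨y, hy, rfl⟩
    exact hC.smul_mem hr.le hy
  exact interior_mono hsub (interior_smul₀ hr.ne' C ▸ Set.smul_mem_smul_set hx)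

lemma mem_interior_of_sub_smul_mem [ContinuousAdd V] [ContinuousConstSMul ℝ V]
    (hC : IsClosedConvexCone C) {I S : V} (hI : I ∈ interior C) {ε : ℝ} (hε : 0 < ε)
    (hS : S - ε • I ∈ C) : S ∈ interior C := by
  simpa using hC.add_mem_interior hS (hC.smul_mem_interior hε hI)

end IsClosedConvexCone

lemma exists_sub_smul_mem_of_neg_mem_tanCone {V : Type*} [NormedAddCommGroup V]
    [NormedSpace ℝ V] {C : Set V} (hC : IsClosedConvexCone C) {S I : V} (hS : S ∈ C)
    (hI : I ∈ interior C) (hmI : -I ∈ tanCone C S) :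
    ∃ ε : ℝ, 0 < ε ∧ S - ε • I ∈ C := by
  obtain ⟨δ, hδ, hball⟩ := Metric.mem_nhds_iff.1 (mem_interior_iff_mem_nhds.1 hI)
  obtain ⟨_, ⟨x, hx, l, hl, rfl⟩, hdist⟩ := Metric.mem_closure_iff.1 hmI (δ / 2) (by positivity)
  have hv : -I - (2 * l) • (x - S) ∈ C := by
    refine hball ?_
    rw [dist_eq_norm] at hdist
    rw [Metric.mem_ball, dist_eq_norm]
    calc ‖-I - (2 * l) • (x - S) - I‖ = 2 * ‖-I - l • (x - S)‖ := by
          rw [show -I - (2 * l) • (x - S) - I = (2 : ℝ) • (-I - l • (x - S)) by module,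
            norm_smul, Real.norm_two]
      _ < δ := by linarith
  have hshift : (l + 1) • S - (1 / 2 : ℝ) • I ∈ C := by
    convert hC.add_mem (hC.add_mem (hC.smul_mem hl hx) hS)
      (hC.smul_mem (r := 1 / 2) (by norm_num) hv) using 1
    module
  have hl1 : 0 < l + 1 := by linarith
  refine ⟨(2 * (l + 1))⁻¹, by positivity, ?_⟩
  convert hC.smul_mem (inv_nonneg.2 hl1.le) hshift using 1
  match_scalars <;> field_simp

theorem stmt6_general {V : Type*} [NormedAddCommGroup V] [NormedSpace ℝ V]
    (C : Set V) (hC : IsClosedConvexCone C) (S : V) (hS : S ∈ C) (I : V)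
    (hI : I ∈ interior C) (hmI : -I ∈ interior (tanCone C S)) :
    S ∈ interior C ∧ ∃ ε : ℝ, 0 < ε ∧ S - ε • I ∈ C := by
  obtain ⟨ε, hε, hSε⟩ := exists_sub_smul_mem_of_neg_mem_tanCone hC hS hI (interior_subset hmI)
  exact ⟨hC.mem_interior_of_sub_smul_mem hI hε hSε, ε, hε, hSε⟩

theorem stmt6 {V : Type*} [NormedAddCommGroup V] [NormedSpace ℝ V] [FiniteDimensional ℝ V]
    (C : Set V) (hC : IsClosedConvexCone C) (S : V) (hS : S ∈ C) (I : V)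
    (hI : I ∈ interior C) (hmI : -I ∈ interior (tanCone C S)) :
    S ∈ interior C ∧ ∃ ε : ℝ, 0 < ε ∧ S - ε • I ∈ C :=
  stmt6_general C hC S hS I hI hmI
end

section
/- Suppose an algebraic curvature tensor S on ℝ^n (n ≥ 4) satisfies the algebraic identity Q(S) - 2(n-1)S - 2(n-1)κ(κ-1)I = -L for some tensor L, where Q(S) ∈ T_S C, -S ∈ T_S C, L ∈ T_S C for a closed convex cone C containing S, with 0 < κ < 1 and I in the interior of T_S C. Then S lies in the interior of C. (Algebraic core of Proposition 4 of the paper.) -/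
open Finset

open Finset

/-!
Solving the identity for `S` gives `S = c Q(S) + c L + κ(1-κ) I` with `c = 1/(2(n-1))`, hence
`0 = κ(1-κ) I + (c Q(S) + c L - S)`, an interior point of the convex cone `T_S C` plus an element
of it; so `0` is interior to `T_S C`. For a convex set in finite dimensions this forces `S` to be
interior to `C`: the cone spans everything, so `C` has an interior point `p`, and the cone of
feasible directions, whose closure is `T_S C`, contains `t (S - p) = l (x - S)` for some `t > 0`,
`x ∈ C`, which puts `S` on the segment from the interior point `p` to `x`.
-/

open Filter Topology

namespace ConvexCone

variable {E : Type*} [AddCommGroup E] [TopologicalSpace E]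

theorem add_mem_interior [IsTopologicalAddGroup E] {𝕜 : Type*} [Semiring 𝕜] [PartialOrder 𝕜]
    [SMul 𝕜 E] {K : ConvexCone 𝕜 E} {x y : E} (hx : x ∈ interior (K : Set E))
    (hy : y ∈ K) : x + y ∈ interior (K : Set E) :=
  interior_mono (Set.add_subset_iff.2 fun _ ha _ hb => K.add_mem ha hb)
    (subset_interior_add_left (Set.add_mem_add hx hy))

theorem smul_mem_interior {𝕜 : Type*} [Field 𝕜] [PartialOrder 𝕜] [Module 𝕜 E]
    [ContinuousConstSMul 𝕜 E] {K : ConvexCone 𝕜 E} {c : 𝕜} (hc : 0 < c) {x : E}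
    (hx : x ∈ interior (K : Set E)) : c • x ∈ interior (K : Set E) :=
  interior_mono (Set.smul_set_subset_iff.2 fun _ ha => K.smul_mem hc ha)
    (interior_smul₀ hc.ne' (K : Set E) ▸ Set.smul_mem_smul_set hx)

end ConvexCone

section TangentCone

variable {V : Type*} [NormedAddCommGroup V] [NormedSpace ℝ V] {C : Set V} {S : V}

def Convex.directionCone (hC : Convex ℝ C) (S : V) : ConvexCone ℝ V where
  carrier := {v | ∃ x ∈ C, ∃ l : ℝ, 0 ≤ l ∧ v = l • (x - S)}
  smul_mem' := by
    rintro c hc _ ⟨x, hx, l, hl, rfl⟩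
    exact ⟨x, hx, c * l, by positivity, smul_smul c l _⟩
  add_mem' := by
    rintro _ ⟨x, hx, a, ha, rfl⟩ _ ⟨y, hy, b, hb, rfl⟩
    rcases (add_nonneg ha hb).eq_or_lt with hab | hab
    · obtain ⟨rfl, rfl⟩ : a = 0 ∧ b = 0 := ⟨by linarith, by linarith⟩
      exact ⟨x, hx, 0, le_rfl, by simp⟩
    · refine ⟨(a / (a + b)) • x + (b / (a + b)) • y,
        hC hx hy (by positivity) (by positivity) (by field_simp), a + b, hab.le, ?_⟩
      simp only [smul_sub, smul_add, smul_smul, mul_div_cancel₀ _ hab.ne']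
      module

theorem Convex.tanCone_eq_closure_directionCone (hC : Convex ℝ C) :
    tanCone C S = ((hC.directionCone S).closure : Set V) :=
  rfl

theorem Convex.interior_nonempty_of_zero_mem_interior_tanCone [FiniteDimensional ℝ V]
    (hC : Convex ℝ C) (hS : S ∈ C) (h0 : (0 : V) ∈ interior (tanCone C S)) :
    (interior C).Nonempty := by
  have hsub : tanCone C S ⊆ vectorSpan ℝ C := by
    refine closure_minimal ?_ (Submodule.closed_of_finiteDimensional _)
    rintro _ ⟨x, hx, l, -, rfl⟩
    exact Submodule.smul_mem _ l (vsub_mem_vectorSpan ℝ hx hS)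
  have hspan : vectorSpan ℝ C = ⊤ :=
    Submodule.eq_top_of_nonempty_interior' _ ⟨0, interior_mono hsub h0⟩
  exact hC.interior_nonempty_iff_affineSpan_eq_top.2
    ((AffineSubspace.affineSpan_eq_top_iff_vectorSpan_eq_top_of_nonempty ℝ V V ⟨S, hS⟩).2 hspan)

theorem Convex.mem_interior_of_zero_mem_interior_tanCone [FiniteDimensional ℝ V]
    (hC : Convex ℝ C) (hS : S ∈ C) (h0 : (0 : V) ∈ interior (tanCone C S)) :
    S ∈ interior C := by
  obtain ⟨p, hp⟩ := hC.interior_nonempty_of_zero_mem_interior_tanCone hS h0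
  set K : ConvexCone ℝ V := hC.directionCone S
  have hpK : p - S ∈ interior (K : Set V) := by
    have hp' : p - S ∈ interior (Homeomorph.subRight S '' C) :=
      (Homeomorph.subRight S).image_interior C ▸ ⟨p, hp, rfl⟩
    refine interior_mono ?_ hp'
    rintro _ ⟨x, hx, rfl⟩
    exact ⟨x, hx, 1, zero_le_one, (one_smul ℝ _).symm⟩
  have hK : (K : Set V) ∈ 𝓝 0 := by
    rw [← mem_interior_iff_mem_nhds,
      ← K.convex.interior_closure_eq_interior_of_nonempty_interior ⟨_, hpK⟩, ← K.coe_closure,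
      ← hC.tanCone_eq_closure_directionCone]
    exact h0
  obtain ⟨t, ht, x, hx, l, hl, htl⟩ : ∃ t > (0 : ℝ), t • (S - p) ∈ K :=
    ((continuous_id.smul continuous_const).tendsto' 0 0 (zero_smul ℝ (S - p))).eventually_mem
      hK |>.exists_gt
  have htl_pos : t + l ≠ 0 := by positivity
  have hS_eq : S = (t / (t + l)) • p + (l / (t + l)) • x := by
    apply smul_right_injective V htl_pos
    simp only [smul_add, smul_smul, mul_div_cancel₀ _ htl_pos]
    linear_combination (norm := module) htl
  rw [hS_eq]
  exact hC.combo_interior_self_mem_interior hp hx (by positivity) (by positivity) (by field_simp)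

end TangentCone

theorem stmt10_general (n : ℕ) (hn : 4 ≤ n) (C : Set (Fin n → Fin n → Fin n → Fin n → ℝ))
    (hC : IsClosedConvexCone C) (S : Fin n → Fin n → Fin n → Fin n → ℝ)
    (hS : S ∈ C) (κ : ℝ) (hκ0 : 0 < κ) (hκ1 : κ < 1)
    (L : Fin n → Fin n → Fin n → Fin n → ℝ)
    (heq : ∀ i j k l, Qc S i j k l - 2 * ((n : ℝ) - 1) * S i j k l
        - 2 * ((n : ℝ) - 1) * κ * (κ - 1) * Idt n i j k l = -L i j k l)
    (hQ : Qc S ∈ tanCone C S) (hmS : -S ∈ tanCone C S)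
    (hL : L ∈ tanCone C S) (hI : Idt n ∈ interior (tanCone C S)) :
    S ∈ interior C := by
  have hconv : Convex ℝ C := hC.2.1
  set K := (hconv.directionCone S).closure
  rw [hconv.tanCone_eq_closure_directionCone] at hQ hmS hL hI
  have hn1 : 0 < (n : ℝ) - 1 := by
    have : (4 : ℝ) ≤ n := by exact_mod_cast hn
    linarith
  set c := (2 * ((n : ℝ) - 1))⁻¹
  have hc : 0 < c := by positivity
  have hzero : (κ * (1 - κ)) • Idt n + (c • Qc S + c • L + -S) = 0 := by
    funext i j k l
    simp only [Pi.add_apply, Pi.smul_apply, Pi.neg_apply, Pi.zero_apply, smul_eq_mul, c]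
    field_simp [hn1.ne']
    linear_combination heq i j k l
  apply hconv.mem_interior_of_zero_mem_interior_tanCone hS
  rw [hconv.tanCone_eq_closure_directionCone, ← hzero]
  exact K.add_mem_interior (K.smul_mem_interior (mul_pos hκ0 (sub_pos.2 hκ1)) hI)
    (K.add_mem (K.add_mem (K.smul_mem hc hQ) (K.smul_mem hc hL)) hmS)

/-- Algebraic core of Proposition 4: if `Q(S) - 2(n-1)S - 2(n-1)κ(κ-1)I = -L` with
`Q(S), -S, L ∈ T_S C`, `0 < κ < 1`, and `I` in the interior of `T_S C`,
then `S` lies in the interior of `C`. -/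
theorem stmt10 (n : ℕ) (hn : 4 ≤ n) (C : Set (Fin n → Fin n → Fin n → Fin n → ℝ))
    (hC : IsClosedConvexCone C) (S : Fin n → Fin n → Fin n → Fin n → ℝ)
    (hSact : IsACT S) (hS : S ∈ C) (κ : ℝ) (hκ0 : 0 < κ) (hκ1 : κ < 1)
    (L : Fin n → Fin n → Fin n → Fin n → ℝ)
    (heq : ∀ i j k l, Qc S i j k l - 2 * ((n : ℝ) - 1) * S i j k l
        - 2 * ((n : ℝ) - 1) * κ * (κ - 1) * Idt n i j k l = -L i j k l)
    (hQ : Qc S ∈ tanCone C S) (hmS : -S ∈ tanCone C S)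
    (hL : L ∈ tanCone C S) (hI : Idt n ∈ interior (tanCone C S)) :
    S ∈ interior C :=
  stmt10_general n hn C hC S hS κ hκ0 hκ1 L heq hQ hmS hL hI
end
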